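/- arXiv:1811.04805 — 6 statements merged into one kernel-verified Lean document; each statement's English description precedes it below -/
import Mathlib

section
/- Let M be a compact metric space and {Ψ_i}_{i≥1} a countable family of continuous functions from M to [0,1] that is dense in C(M,[0,1]). Define d(μ,ν) := Σ_{i≥1} 2^{-i} |∫Ψ_i dμ − ∫Ψ_i dν| for Borel probability measures μ, ν on M. Then for every ε > 0 there exists q ≥ 1 such that: if μ and ν are Borel probability measures on M whose supports are both contained in a union ∪_{j=1}^m I_j of pairwise disjoint closed connected sets, with diam(I_j) ≤ 1/q for each j, and |ν(I_j) − μ(I_j)| ≤ 1/(qm) for each j, then d(μ,ν) < ε. -/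
open MeasureTheory Filter Topology Metric Set
open Function

/-- The explicit metric `d` on measures induced by a countable family of test functions. -/
noncomputable def wd {M : Type*} [MetricSpace M] [MeasurableSpace M]
    (Ψ : ℕ → M → ℝ) (μ ν : Measure M) : ℝ :=
  ∑' i : ℕ, (1 / 2 : ℝ) ^ (i + 1) * |(∫ x, Ψ i x ∂μ) - ∫ x, Ψ i x ∂ν|

/-!
Fix `N` with `2⁻ᴺ < ε / 2`: since `0 ≤ Ψ i ≤ 1`, the terms of `wd` with `i ≥ N` contribute at
most `2⁻ᴺ`. The finitely many `Ψ i` with `i < N` are uniformly continuous, so for `q` large each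
of them oscillates by at most `ε / 8` on every piece `I j`. Comparing `Ψ i` on each `I j` with its
value at one point of `I j` then gives `|∫ Ψ i ∂μ - ∫ Ψ i ∂ν| ≤ ε / 4 + ∑ j |μ (I j) - ν (I j)| ≤ ε / 4 + 1 / q`.
-/

theorem hasSum_half_pow_succ : HasSum (fun i : ℕ => (1 / 2 : ℝ) ^ (i + 1)) 1 := by
  simpa [pow_succ, div_eq_mul_inv, mul_comm] using hasSum_geometric_two' 1

theorem tsum_half_pow_succ_mul_le {a : ℕ → ℝ} {η : ℝ} (N : ℕ) (hη : 0 ≤ η)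
    (ha0 : ∀ i, 0 ≤ a i) (ha1 : ∀ i, a i ≤ 1) (haN : ∀ i < N, a i ≤ η) :
    ∑' i, (1 / 2 : ℝ) ^ (i + 1) * a i ≤ η + (1 / 2) ^ N := by
  have hle : ∀ i, (1 / 2 : ℝ) ^ (i + 1) * a i ≤ (1 / 2) ^ (i + 1) :=
    fun i => mul_le_of_le_one_right (by positivity) (ha1 i)
  have hs : Summable fun i => (1 / 2 : ℝ) ^ (i + 1) * a i :=
    hasSum_half_pow_succ.summable.of_nonneg_of_le (fun i => by have := ha0 i; positivity) hle
  rw [← hs.sum_add_tsum_nat_add N]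
  gcongr
  · calc ∑ i ∈ Finset.range N, (1 / 2 : ℝ) ^ (i + 1) * a i
        ≤ ∑ i ∈ Finset.range N, (1 / 2 : ℝ) ^ (i + 1) * η :=
          Finset.sum_le_sum fun i hi => by gcongr; exact haN i (Finset.mem_range.mp hi)
      _ ≤ (∑' i, (1 / 2 : ℝ) ^ (i + 1)) * η := by
          rw [← Finset.sum_mul]
          gcongr
          exact hasSum_half_pow_succ.summable.sum_le_tsum _ fun i _ => by positivity
      _ = η := by rw [hasSum_half_pow_succ.tsum_eq, one_mul]
  · have htail : HasSum (fun i => (1 / 2 : ℝ) ^ (i + N + 1)) ((1 / 2) ^ N) := by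
      simpa [pow_add, mul_comm, mul_left_comm] using hasSum_half_pow_succ.mul_left ((1 / 2 : ℝ) ^ N)
    exact ((hs.comp_injective (add_left_injective N)).tsum_le_tsum (fun i => hle (i + N))
      htail.summable).trans_eq htail.tsum_eq

theorem abs_setIntegral_sub_measureReal_mul_le {M : Type*} [MeasurableSpace M] {ρ : Measure M}
    {s : Set M} {f : M → ℝ} {c η : ℝ} (hρs : ρ s ≠ ⊤) (hf : IntegrableOn f s ρ)
    (hfc : ∀ x ∈ s, |f x - c| ≤ η) :
    |∫ x in s, f x ∂ρ - ρ.real s * c| ≤ η * ρ.real s := by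
  rw [← smul_eq_mul, ← setIntegral_const, ← integral_sub hf (integrableOn_const hρs)]
  exact norm_setIntegral_le_of_norm_le_const (f := fun x => f x - c) hρs.lt_top hfc

theorem abs_setIntegral_sub_setIntegral_le {M : Type*} [MeasurableSpace M] {μ ν : Measure M}
    [IsFiniteMeasure μ] [IsFiniteMeasure ν] {s : Set M} {f : M → ℝ} {η : ℝ}
    (hfμ : IntegrableOn f s μ) (hfν : IntegrableOn f s ν) (hf1 : ∀ x ∈ s, |f x| ≤ 1)
    (hosc : ∀ x ∈ s, ∀ y ∈ s, |f x - f y| ≤ η) :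
    |∫ x in s, f x ∂μ - ∫ x in s, f x ∂ν| ≤
      η * μ.real s + η * ν.real s + |μ.real s - ν.real s| := by
  rcases s.eq_empty_or_nonempty with rfl | ⟨x₀, hx₀⟩
  · simp
  have hμ := abs_setIntegral_sub_measureReal_mul_le (measure_ne_top μ s) hfμ (hosc · · x₀ hx₀)
  have hν := abs_setIntegral_sub_measureReal_mul_le (measure_ne_top ν s) hfν (hosc · · x₀ hx₀)
  have hc : |f x₀ * (μ.real s - ν.real s)| ≤ |μ.real s - ν.real s| := by
    rw [abs_mul]
    exact mul_le_of_le_one_left (abs_nonneg _) (hf1 x₀ hx₀)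
  calc |∫ x in s, f x ∂μ - ∫ x in s, f x ∂ν|
      = |(∫ x in s, f x ∂μ - μ.real s * f x₀) - (∫ x in s, f x ∂ν - ν.real s * f x₀)
          + f x₀ * (μ.real s - ν.real s)| := by congr 1; ring
    _ ≤ _ := (abs_add_le _ _).trans (add_le_add ((abs_sub _ _).trans (add_le_add hμ hν)) hc)

theorem integral_eq_sum_setIntegral {M ι : Type*} [MeasurableSpace M] [Fintype ι]
    {ρ : Measure M} [IsProbabilityMeasure ρ] {I : ι → Set M} (hI : ∀ j, MeasurableSet (I j))
    (hd : Pairwise (Disjoint on I)) (hρ : ρ (⋃ j, I j) = 1) {f : M → ℝ} (hf : Integrable f ρ) :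
    ∫ x, f x ∂ρ = ∑ j, ∫ x in I j, f x ∂ρ := by
  have hae : ∀ᵐ x ∂ρ, x ∈ ⋃ j, I j :=
    (ae_mem_iff_measure_eq (MeasurableSet.iUnion hI).nullMeasurableSet).mpr (by simp [hρ])
  rw [← integral_iUnion_fintype hI hd fun j => hf.integrableOn,
    Measure.restrict_eq_self_of_ae_mem hae]

theorem abs_integral_sub_integral_le {M ι : Type*} [MeasurableSpace M] [Fintype ι]
    {μ ν : Measure M} [IsProbabilityMeasure μ] [IsProbabilityMeasure ν] {I : ι → Set M}
    (hI : ∀ j, MeasurableSet (I j)) (hd : Pairwise (Disjoint on I))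
    (hμ : μ (⋃ j, I j) = 1) (hν : ν (⋃ j, I j) = 1) {f : M → ℝ} {η : ℝ}
    (hfμ : Integrable f μ) (hfν : Integrable f ν) (hf1 : ∀ x, |f x| ≤ 1)
    (hosc : ∀ j, ∀ x ∈ I j, ∀ y ∈ I j, |f x - f y| ≤ η) :
    |∫ x, f x ∂μ - ∫ x, f x ∂ν| ≤ 2 * η + ∑ j, |μ.real (I j) - ν.real (I j)| := by
  have hsum : ∀ ρ : Measure M, IsProbabilityMeasure ρ → ρ (⋃ j, I j) = 1 →
      ∑ j, ρ.real (I j) = 1 := fun ρ _ hρ => by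
    rw [← measureReal_iUnion_fintype hd hI, measureReal_def, hρ, ENNReal.toReal_one]
  rw [integral_eq_sum_setIntegral hI hd hμ hfμ, integral_eq_sum_setIntegral hI hd hν hfν,
    ← Finset.sum_sub_distrib]
  calc |∑ j, (∫ x in I j, f x ∂μ - ∫ x in I j, f x ∂ν)|
      ≤ ∑ j, (η * μ.real (I j) + η * ν.real (I j) + |μ.real (I j) - ν.real (I j)|) :=
        (Finset.abs_sum_le_sum_abs _ _).trans <| Finset.sum_le_sum fun j _ =>
          abs_setIntegral_sub_setIntegral_le hfμ.integrableOn hfν.integrableOn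
            (fun x _ => hf1 x) (hosc j)
    _ = 2 * η + ∑ j, |μ.real (I j) - ν.real (I j)| := by
        rw [Finset.sum_add_distrib, Finset.sum_add_distrib, ← Finset.mul_sum, ← Finset.mul_sum,
          hsum μ ‹_› hμ, hsum ν ‹_› hν]
        ring

theorem abs_integral_sub_integral_le_one {M : Type*} [MeasurableSpace M] {μ ν : Measure M}
    [IsProbabilityMeasure μ] [IsProbabilityMeasure ν] {f : M → ℝ} (hfμ : Integrable f μ)
    (hfν : Integrable f ν) (h01 : ∀ x, f x ∈ Icc (0 : ℝ) 1) :
    |∫ x, f x ∂μ - ∫ x, f x ∂ν| ≤ 1 := by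
  have hmem : ∀ ρ : Measure M, IsProbabilityMeasure ρ → Integrable f ρ →
      0 ≤ ∫ x, f x ∂ρ ∧ ∫ x, f x ∂ρ ≤ 1 := fun ρ _ hf =>
    ⟨integral_nonneg fun x => (h01 x).1,
      (integral_mono hf (integrable_const 1) fun x => (h01 x).2).trans_eq (by simp)⟩
  obtain ⟨hμ0, hμ1⟩ := hmem μ ‹_› hfμ
  obtain ⟨hν0, hν1⟩ := hmem ν ‹_› hfν
  exact abs_sub_le_of_nonneg_of_le hμ0 hμ1 hν0 hν1

theorem exists_pos_forall_abs_sub_le_of_dist_lt {M ι : Type*} [MetricSpace M] [CompactSpace M]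
    [Fintype ι] {f : ι → M → ℝ} (hf : ∀ i, Continuous (f i)) {η : ℝ} (hη : 0 < η) :
    ∃ δ > 0, ∀ x y, dist x y < δ → ∀ i, |f i x - f i y| ≤ η := by
  obtain ⟨δ, hδ, h⟩ := Metric.uniformContinuous_iff.mp
    (CompactSpace.uniformContinuous_of_continuous (continuous_pi hf)) η hη
  exact ⟨δ, hδ, fun x y hxy i =>
    (dist_le_pi_dist (fun i => f i x) (fun i => f i y) i).trans (h hxy).le⟩

theorem natCast_mul_one_div_mul_le {q : ℝ} (hq : 0 ≤ q) (m : ℕ) :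
    m * (1 / (q * m)) ≤ 1 / q := by
  rcases eq_or_ne (m : ℝ) 0 with hm | hm
  · rw [hm, zero_mul]; positivity
  · rw [mul_one_div, div_mul_cancel_right₀ hm, one_div]

theorem stmt0_general {M : Type*} [MetricSpace M] [CompactSpace M]
    [MeasurableSpace M] [BorelSpace M]
    (Ψ : ℕ → M → ℝ)
    (hΨc : ∀ i, Continuous (Ψ i))
    (hΨ01 : ∀ i x, Ψ i x ∈ Set.Icc (0 : ℝ) 1) :
    ∀ ε > (0 : ℝ), ∃ q : ℕ, 1 ≤ q ∧
      ∀ (μ ν : Measure M), IsProbabilityMeasure μ → IsProbabilityMeasure ν →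
      ∀ (m : ℕ) (I : Fin m → Set M),
        (∀ j, IsClosed (I j)) → (∀ j, IsConnected (I j)) →
        (∀ j k, j ≠ k → Disjoint (I j) (I k)) →
        (∀ j, diam (I j) ≤ 1 / q) →
        μ (⋃ j, I j) = 1 → ν (⋃ j, I j) = 1 →
        (∀ j, |(ν (I j)).toReal - (μ (I j)).toReal| ≤ 1 / (q * m)) →
        wd Ψ μ ν < ε := by
  intro ε hε
  obtain ⟨N, hN⟩ := exists_pow_lt_of_lt_one (half_pos hε) one_half_lt_one
  obtain ⟨δ, hδ, hΨδ⟩ := exists_pos_forall_abs_sub_le_of_dist_lt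
    (f := fun i : Fin N => Ψ i) (fun i => hΨc i) (η := ε / 8) (by positivity)
  obtain ⟨n, hn⟩ := exists_nat_one_div_lt (lt_min hδ (by positivity : 0 < ε / 4))
  refine ⟨n + 1, by omega, fun μ ν _ _ m I hIc _ hId hIdiam hμ hν hIν => ?_⟩
  have hq : 1 / ((n + 1 : ℕ) : ℝ) < min δ (ε / 4) := by exact_mod_cast hn
  have hint : ∀ i (ρ : Measure M) [IsFiniteMeasure ρ], Integrable (Ψ i) ρ := fun i ρ _ =>
    (hΨc i).integrable_of_hasCompactSupport (HasCompactSupport.of_compactSpace _)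
  have hosc : ∀ i < N, ∀ j, ∀ x ∈ I j, ∀ y ∈ I j, |Ψ i x - Ψ i y| ≤ ε / 8 :=
    fun i hi j x hx y hy => hΨδ x y
      ((dist_le_diam_of_mem isBounded_of_compactSpace hx hy).trans_lt
        ((hIdiam j).trans_lt (hq.trans_le (min_le_left _ _)))) ⟨i, hi⟩
  have hmass : ∑ j, |μ.real (I j) - ν.real (I j)| ≤ 1 / ((n + 1 : ℕ) : ℝ) :=
    calc ∑ j, |μ.real (I j) - ν.real (I j)|
        ≤ ∑ _j : Fin m, 1 / (((n + 1 : ℕ) : ℝ) * m) :=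
          Finset.sum_le_sum fun j _ => (abs_sub_comm _ _).trans_le (hIν j)
      _ ≤ 1 / ((n + 1 : ℕ) : ℝ) := by
          simpa using natCast_mul_one_div_mul_le (Nat.cast_nonneg (n + 1)) m
  have hhead : ∀ i < N, |∫ x, Ψ i x ∂μ - ∫ x, Ψ i x ∂ν| ≤ ε / 2 := fun i hi => by
    have := abs_integral_sub_integral_le (fun j => (hIc j).measurableSet) hId hμ hν
      (hint i μ) (hint i ν)
      (fun x => (abs_of_nonneg (hΨ01 i x).1).trans_le (hΨ01 i x).2) (hosc i hi)
    linarith [min_le_right δ (ε / 4)]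
  have := tsum_half_pow_succ_mul_le N (half_pos hε).le (fun i => abs_nonneg _)
    (fun i => abs_integral_sub_integral_le_one (hint i μ) (hint i ν) (hΨ01 i)) hhead
  unfold wd
  linarith

theorem stmt0 {M : Type*} [MetricSpace M] [CompactSpace M]
    [MeasurableSpace M] [BorelSpace M]
    (Ψ : ℕ → M → ℝ)
    (hΨc : ∀ i, Continuous (Ψ i))
    (hΨ01 : ∀ i x, Ψ i x ∈ Set.Icc (0 : ℝ) 1)
    (hdense : ∀ g : M → ℝ, Continuous g → (∀ x, g x ∈ Set.Icc (0 : ℝ) 1) →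
      ∀ ε > (0 : ℝ), ∃ i, ∀ x, |g x - Ψ i x| ≤ ε) :
    ∀ ε > (0 : ℝ), ∃ q : ℕ, 1 ≤ q ∧
      ∀ (μ ν : Measure M), IsProbabilityMeasure μ → IsProbabilityMeasure ν →
      ∀ (m : ℕ) (I : Fin m → Set M),
        (∀ j, IsClosed (I j)) → (∀ j, IsConnected (I j)) →
        (∀ j k, j ≠ k → Disjoint (I j) (I k)) →
        (∀ j, diam (I j) ≤ 1 / q) →
        μ (⋃ j, I j) = 1 → ν (⋃ j, I j) = 1 →
        (∀ j, |(ν (I j)).toReal - (μ (I j)).toReal| ≤ 1 / (q * m)) →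
        wd Ψ μ ν < ε :=
  stmt0_general Ψ hΨc hΨ01
end

section
/- Let f : M → M be continuous on a compact metric space, let x ∈ M, and suppose there is p ≥ 1 and δ > 0 such that dist(f^{ℓp + r}(x), f^r(x)) < δ for all ℓ ≥ 0 and 0 ≤ r < p. Let φ : M → ℝ be continuous with modulus: dist(y,z) < δ implies |φ(y) − φ(z)| < ε. Then limsup_{n→∞} (1/n) Σ_{j=0}^{n−1} φ(f^j(x)) − liminf_{n→∞} (1/n) Σ_{j=0}^{n−1} φ(f^j(x)) ≤ 4ε. -/
open MeasureTheory Filter Topology Metric Set Function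

/-! The orbit values `φ (f^[j] x)` stay within `ε` of the `p`-periodic sequence `φ (f^[j % p] x)`,
so the Birkhoff averages stay within `ε` of the Cesàro means of that periodic sequence. These
converge to the mean over one period, because the partial sums of the deviations from that mean
are again `p`-periodic, hence bounded. All limit points of the averages therefore lie in an
interval of length `2ε`. -/

noncomputable def cesaroMean (u : ℕ → ℝ) (n : ℕ) : ℝ := (n : ℝ)⁻¹ * ∑ j ∈ Finset.range n, u j

theorem Function.Periodic.bddAbove_range_of_nat {α : Type*} [SemilatticeSup α] [Nonempty α]
    {g : ℕ → α} {p : ℕ} (hg : Periodic g p) (hp : 0 < p) : BddAbove (range g) :=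
  ((finite_Iio p).image g).bddAbove.mono <| by
    rintro _ ⟨n, rfl⟩
    exact ⟨n % p, Nat.mod_lt n hp, hg.map_mod_nat n⟩

theorem Function.Periodic.sum_range_periodic {A : Type*} [AddCommMonoid A] {g : ℕ → A} {p : ℕ}
    (hg : Periodic g p) (hsum : ∑ j ∈ Finset.range p, g j = 0) :
    Periodic (fun n ↦ ∑ j ∈ Finset.range n, g j) p := by
  intro n
  induction n with
  | zero => simpa using hsum
  | succ n ih =>
    simp only at ih ⊢
    rw [Nat.add_right_comm, Finset.sum_range_succ, Finset.sum_range_succ, ih, hg n]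

theorem tendsto_cesaroMean_of_periodic {v : ℕ → ℝ} {p : ℕ} (hv : Periodic v p) (hp : 0 < p) :
    Tendsto (cesaroMean v) atTop (𝓝 ((p : ℝ)⁻¹ * ∑ j ∈ Finset.range p, v j)) := by
  set S := (p : ℝ)⁻¹ * ∑ j ∈ Finset.range p, v j
  set G := fun n ↦ ∑ j ∈ Finset.range n, (v j - S)
  have hG : Periodic G p := Periodic.sum_range_periodic (fun j ↦ congrArg (· - S) (hv j)) <| by
    rw [Finset.sum_sub_distrib, Finset.sum_const, Finset.card_range, nsmul_eq_mul,
      mul_inv_cancel_left₀ (Nat.cast_pos.2 hp).ne', sub_self]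
  have hdev : Tendsto (fun n : ℕ ↦ (n : ℝ)⁻¹ * G n) atTop (𝓝 0) :=
    tendsto_inv_atTop_nhds_zero_nat.zero_mul_isBoundedUnder_le
      ((hG.comp norm).bddAbove_range_of_nat hp).isBoundedUnder_of_range
  have heq : (fun n : ℕ ↦ S + (n : ℝ)⁻¹ * G n) =ᶠ[atTop] cesaroMean v := by
    filter_upwards [eventually_gt_atTop 0] with n hn
    simp only [G, cesaroMean, Finset.sum_sub_distrib, Finset.sum_const, Finset.card_range,
      nsmul_eq_mul]
    field_simp
    ring
  simpa using (tendsto_const_nhds.add hdev).congr' heq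

theorem abs_cesaroMean_sub_le {u v : ℕ → ℝ} {ε : ℝ} (h : ∀ j, |u j - v j| ≤ ε) (n : ℕ) :
    |cesaroMean u n - cesaroMean v n| ≤ ε := by
  rcases n.eq_zero_or_pos with rfl | hn
  · simpa [cesaroMean] using (abs_nonneg _).trans (h 0)
  rw [cesaroMean, cesaroMean, ← mul_sub, ← Finset.sum_sub_distrib, abs_mul, abs_inv,
    Nat.abs_cast, inv_mul_le_iff₀ (by positivity)]
  calc |∑ j ∈ Finset.range n, (u j - v j)| ≤ ∑ j ∈ Finset.range n, |u j - v j| :=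
        Finset.abs_sum_le_sum_abs _ _
    _ ≤ ∑ _j ∈ Finset.range n, ε := Finset.sum_le_sum fun j _ ↦ h j
    _ = n * ε := by simp

theorem limsup_sub_liminf_le_of_abs_sub_le {ι : Type*} {l : Filter ι} [NeBot l] {a b : ι → ℝ}
    {L ε : ℝ} (hb : Tendsto b l (𝓝 L)) (h : ∀ i, |a i - b i| ≤ ε) :
    limsup a l - liminf a l ≤ 2 * ε := by
  have hle : ∀ i, a i ≤ b i + ε := fun i ↦ by linarith [(abs_le.1 (h i)).2]
  have hge : ∀ i, b i - ε ≤ a i := fun i ↦ by linarith [(abs_le.1 (h i)).1]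
  have hup : limsup a l ≤ L + ε := by
    rw [← (hb.add_const ε).limsup_eq]
    exact limsup_le_limsup (.of_forall hle)
      ((hb.sub_const ε).isBoundedUnder_ge.mono_ge (.of_forall hge)).isCoboundedUnder_le
      (hb.add_const ε).isBoundedUnder_le
  have hlow : L - ε ≤ liminf a l := by
    rw [← (hb.sub_const ε).liminf_eq]
    exact liminf_le_liminf (.of_forall hge) (hb.sub_const ε).isBoundedUnder_ge
      ((hb.add_const ε).isBoundedUnder_le.mono_le (.of_forall hle)).isCoboundedUnder_ge
  linarith

theorem stmt4_general {M : Type*} [MetricSpace M]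
    (f : M → M) (x : M)
    (p : ℕ) (hp : 1 ≤ p) (δ ε : ℝ)
    (horbit : ∀ (ℓ r : ℕ), r < p → dist (f^[ℓ * p + r] x) (f^[r] x) < δ)
    (φ : M → ℝ)
    (hmod : ∀ y z : M, dist y z < δ → |φ y - φ z| < ε) :
    Filter.limsup (fun n : ℕ => (n : ℝ)⁻¹ * ∑ j ∈ Finset.range n, φ (f^[j] x)) atTop -
      Filter.liminf (fun n : ℕ => (n : ℝ)⁻¹ * ∑ j ∈ Finset.range n, φ (f^[j] x)) atTop
      ≤ 4 * ε := by
  have hclose : ∀ j, |φ (f^[j] x) - φ (f^[j % p] x)| ≤ ε := fun j ↦ by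
    have h := horbit (j / p) (j % p) (Nat.mod_lt j hp)
    rw [Nat.div_add_mod'] at h
    exact (hmod _ _ h).le
  have hper : Periodic (fun j ↦ φ (f^[j % p] x)) p := fun j ↦ by simp
  have hosc := limsup_sub_liminf_le_of_abs_sub_le (tendsto_cesaroMean_of_periodic hper hp)
    (abs_cesaroMean_sub_le hclose)
  have hε : 0 ≤ ε := (abs_nonneg _).trans (hclose 0)
  change limsup (cesaroMean _) atTop - liminf (cesaroMean _) atTop ≤ _
  linarith

theorem stmt4 {M : Type*} [MetricSpace M] [CompactSpace M]
    (f : M → M) (hf : Continuous f) (x : M)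
    (p : ℕ) (hp : 1 ≤ p) (δ ε : ℝ) (hδ : 0 < δ) (hε : 0 < ε)
    (horbit : ∀ (ℓ r : ℕ), r < p → dist (f^[ℓ * p + r] x) (f^[r] x) < δ)
    (φ : M → ℝ) (hφ : Continuous φ)
    (hmod : ∀ y z : M, dist y z < δ → |φ y - φ z| < ε) :
    Filter.limsup (fun n : ℕ => (n : ℝ)⁻¹ * ∑ j ∈ Finset.range n, φ (f^[j] x)) atTop -
      Filter.liminf (fun n : ℕ => (n : ℝ)⁻¹ * ∑ j ∈ Finset.range n, φ (f^[j] x)) atTop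
      ≤ 4 * ε :=
  stmt4_general f x p hp δ ε horbit φ hmod
end

section
/- Let f : M → M be continuous on a compact metric space, and let ν be the unique f-invariant Borel probability measure (f uniquely ergodic). Suppose I is a nonempty open set with ν(I) > 0, and K := ∪_{j=0}^{p−1} f^j(Ī) satisfies f(K) ⊆ K with K ≠ M, where f^p(Ī) ⊆ I. If f is a homeomorphism of M, we reach a contradiction; that is, a homeomorphism of a compact metric space that admits a periodic shrinking set I with K = ∪_{j=0}^{p−1} f^j(Ī) ≠ M and such that its (putative unique) invariant measure gives I positive mass, is not uniquely ergodic. -/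
open MeasureTheory Filter Topology Set Function
open scoped NNReal

/-!
Since `f` maps `K = ⋃_{j<p} f^j(Ī)` into itself and `K ≠ M`, a point `x ∉ K` has its whole
backward orbit `f^{-k} x` outside `K`. The frequencies with which this backward orbit visits the
subsets of `M`, taken as limits along a free ultrafilter, form a finitely additive
`f`-invariant probability on all subsets of `M` that vanishes on `K ⊇ I`. Its restriction to
compact sets is a content, whose measure is an `f`-invariant probability measure `μ` with
`μ I = 0`; unique ergodicity forces `μ = ν`, contradicting `ν I > 0`.
-/

section FinitelyAdditive

variable {α : Type*} {m : Set α → ℝ≥0}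

theorem monotone_of_union_eq_add
    (hadd : ∀ s t, Disjoint s t → m (s ∪ t) = m s + m t) : Monotone m := fun s t hst => by
  rw [← union_sdiff_cancel hst, hadd _ _ disjoint_sdiff_right]
  exact le_self_add

theorem union_le_add_of_union_eq_add
    (hadd : ∀ s t, Disjoint s t → m (s ∪ t) = m s + m t) (s t : Set α) :
    m (s ∪ t) ≤ m s + m t := by
  rw [← union_sdiff_self, hadd _ _ disjoint_sdiff_right]
  gcongr
  exact monotone_of_union_eq_add hadd sdiff_subset

end FinitelyAdditive

namespace MeasureTheory.Content

variable {G : Type*} [TopologicalSpace G] {m : Set G → ℝ≥0}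

def ofAdditive (m : Set G → ℝ≥0) (hadd : ∀ s t, Disjoint s t → m (s ∪ t) = m s + m t) :
    Content G where
  toFun K := m K
  mono' _ _ h := monotone_of_union_eq_add hadd h
  sup_disjoint' K₁ K₂ h _ _ := hadd K₁ K₂ h
  sup_le' K₁ K₂ := union_le_add_of_union_eq_add hadd K₁ K₂

variable [T2Space G] [MeasurableSpace G] [BorelSpace G]

theorem measure_ofAdditive_le_of_isOpen (hadd : ∀ s t, Disjoint s t → m (s ∪ t) = m s + m t)
    {U : Set G} (hU : IsOpen U) : (ofAdditive m hadd).measure U ≤ m U := by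
  rw [measure_apply _ hU.measurableSet, outerMeasure_of_isOpen _ U hU]
  exact iSup₂_le fun K hKU => ENNReal.coe_le_coe.2 (monotone_of_union_eq_add hadd hKU)

theorem measure_ofAdditive_univ [CompactSpace G]
    (hadd : ∀ s t, Disjoint s t → m (s ∪ t) = m s + m t) :
    (ofAdditive m hadd).measure univ = m univ := by
  rw [measure_apply _ MeasurableSet.univ, outerMeasure_of_isOpen _ univ isOpen_univ,
    innerContent_of_isCompact _ isCompact_univ isOpen_univ]
  rfl

theorem measurePreserving_ofAdditive (hadd : ∀ s t, Disjoint s t → m (s ∪ t) = m s + m t)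
    (e : G ≃ₜ G) (he : ∀ s, m (e '' s) = m s) :
    MeasurePreserving e (ofAdditive m hadd).measure (ofAdditive m hadd).measure := by
  refine ⟨e.continuous.measurable, Measure.ext fun s hs => ?_⟩
  rw [Measure.map_apply e.continuous.measurable hs, measure_apply _ hs,
    measure_apply _ (e.continuous.measurable hs)]
  exact outerMeasure_preimage _ e (fun K => congrArg ENNReal.ofNNReal (he K)) s

end MeasureTheory.Content

section VisitFrequency

variable {α : Type*} (y : ℕ → α)

noncomputable def empiricalFreq (n : ℕ) (s : Set α) : ℝ≥0 :=
  (∑ k ∈ Finset.range n, s.indicator 1 (y k)) / n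

theorem indicator_one_le_one (s : Set α) (a : α) : s.indicator (1 : α → ℝ≥0) a ≤ 1 :=
  indicator_le_self' (fun _ _ => zero_le_one) a

theorem empiricalFreq_le_one (n : ℕ) (s : Set α) : empiricalFreq y n s ≤ 1 := by
  refine div_le_one_of_le₀ ?_ n.cast_nonneg
  simpa using Finset.sum_le_card_nsmul (Finset.range n)
    (fun k => s.indicator (1 : α → ℝ≥0) (y k)) 1 fun k _ => indicator_one_le_one s (y k)

theorem empiricalFreq_union_of_disjoint (n : ℕ) {s t : Set α} (hst : Disjoint s t) :
    empiricalFreq y n (s ∪ t) = empiricalFreq y n s + empiricalFreq y n t := by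
  simp only [empiricalFreq, indicator_union_of_disjoint hst, Finset.sum_add_distrib, add_div]

theorem empiricalFreq_univ {n : ℕ} (hn : n ≠ 0) : empiricalFreq y n univ = 1 := by
  simp [empiricalFreq, hn]

theorem empiricalFreq_of_forall_notMem {s : Set α} (hs : ∀ k, y k ∉ s) (n : ℕ) :
    empiricalFreq y n s = 0 := by
  simp [empiricalFreq, indicator_of_notMem (hs _)]

theorem sum_range_succ_le_add_one {a : ℕ → ℝ≥0} (ha : ∀ k, a k ≤ 1) (n : ℕ) :
    ∑ k ∈ Finset.range n, a (k + 1) ≤ ∑ k ∈ Finset.range n, a k + 1 :=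
  calc _ ≤ ∑ k ∈ Finset.range n, a (k + 1) + a 0 := le_self_add
    _ = ∑ k ∈ Finset.range n, a k + a n := by
      rw [← Finset.sum_range_succ', Finset.sum_range_succ]
    _ ≤ _ := by gcongr; exact ha n

theorem sum_range_le_succ_add_one {a : ℕ → ℝ≥0} (ha : ∀ k, a k ≤ 1) (n : ℕ) :
    ∑ k ∈ Finset.range n, a k ≤ ∑ k ∈ Finset.range n, a (k + 1) + 1 :=
  calc _ ≤ ∑ k ∈ Finset.range n, a k + a n := le_self_add
    _ = ∑ k ∈ Finset.range n, a (k + 1) + a 0 := by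
      rw [← Finset.sum_range_succ', Finset.sum_range_succ]
    _ ≤ _ := by gcongr; exact ha 0

theorem empiricalFreq_shift_le (n : ℕ) (s : Set α) :
    empiricalFreq (fun k => y (k + 1)) n s ≤ empiricalFreq y n s + 1 / n := by
  rw [empiricalFreq, empiricalFreq, ← add_div]
  gcongr
  exact sum_range_succ_le_add_one (fun k => indicator_one_le_one s (y k)) n

theorem empiricalFreq_le_shift (n : ℕ) (s : Set α) :
    empiricalFreq y n s ≤ empiricalFreq (fun k => y (k + 1)) n s + 1 / n := by
  rw [empiricalFreq, empiricalFreq, ← add_div]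
  gcongr
  exact sum_range_le_succ_add_one (fun k => indicator_one_le_one s (y k)) n

variable (𝒰 : Ultrafilter ℕ)

noncomputable def ultraDensity (s : Set α) : ℝ≥0 :=
  limUnder (𝒰 : Filter ℕ) (empiricalFreq y · s)

theorem tendsto_ultraDensity (s : Set α) :
    Tendsto (empiricalFreq y · s) 𝒰 (𝓝 (ultraDensity y 𝒰 s)) := by
  obtain ⟨a, -, ha⟩ := isCompact_Icc.ultrafilter_le_nhds (𝒰.map (empiricalFreq y · s))
    (tendsto_principal.2 <| .of_forall fun n => ⟨zero_le, empiricalFreq_le_one y n s⟩)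
  exact tendsto_nhds_limUnder ⟨a, ha⟩

theorem ultraDensity_union_of_disjoint (s t : Set α) (hst : Disjoint s t) :
    ultraDensity y 𝒰 (s ∪ t) = ultraDensity y 𝒰 s + ultraDensity y 𝒰 t := by
  refine tendsto_nhds_unique (tendsto_ultraDensity y 𝒰 _) ?_
  simpa only [empiricalFreq_union_of_disjoint y _ hst] using
    (tendsto_ultraDensity y 𝒰 s).add (tendsto_ultraDensity y 𝒰 t)

theorem ultraDensity_of_forall_notMem {s : Set α} (hs : ∀ k, y k ∉ s) :
    ultraDensity y 𝒰 s = 0 := by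
  refine tendsto_nhds_unique (tendsto_ultraDensity y 𝒰 s) ?_
  simpa only [empiricalFreq_of_forall_notMem y hs] using tendsto_const_nhds

variable {𝒰}

theorem ultraDensity_univ (h𝒰 : (𝒰 : Filter ℕ) ≤ atTop) :
    ultraDensity y 𝒰 univ = 1 := by
  refine tendsto_nhds_unique (tendsto_ultraDensity y 𝒰 univ) (tendsto_const_nhds.congr' ?_)
  filter_upwards [h𝒰 (eventually_ne_atTop 0)] with n hn
  exact (empiricalFreq_univ y hn).symm

theorem ultraDensity_shift (h𝒰 : (𝒰 : Filter ℕ) ≤ atTop) (s : Set α) :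
    ultraDensity (fun k => y (k + 1)) 𝒰 s = ultraDensity y 𝒰 s := by
  have h1n : Tendsto (fun n : ℕ => 1 / (n : ℝ≥0)) 𝒰 (𝓝 0) :=
    tendsto_one_div_atTop_nhds_zero_nat.mono_left h𝒰
  apply le_antisymm
  · simpa using le_of_tendsto_of_tendsto' (tendsto_ultraDensity _ 𝒰 s)
      ((tendsto_ultraDensity y 𝒰 s).add h1n) (empiricalFreq_shift_le y · s)
  · simpa using le_of_tendsto_of_tendsto' (tendsto_ultraDensity y 𝒰 s)
      ((tendsto_ultraDensity _ 𝒰 s).add h1n) (empiricalFreq_le_shift y · s)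

theorem ultraDensity_image_of_backward_orbit (h𝒰 : (𝒰 : Filter ℕ) ≤ atTop) {e : α → α}
    (he : Injective e) (hy : ∀ k, e (y (k + 1)) = y k) (s : Set α) :
    ultraDensity y 𝒰 (e '' s) = ultraDensity y 𝒰 s := by
  rw [← ultraDensity_shift y h𝒰 s]
  unfold ultraDensity empiricalFreq
  congr! 4 with n k
  rw [← hy k, indicator_image he]
  rfl

end VisitFrequency

theorem mapsTo_biUnion_iterate_image {α : Type*} {f : α → α} {C : Set α} {p : ℕ}
    (hret : f^[p] '' C ⊆ C) :
    MapsTo f (⋃ j ∈ Finset.range p, f^[j] '' C) (⋃ j ∈ Finset.range p, f^[j] '' C) := by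
  simp only [MapsTo, mem_iUnion₂, Finset.mem_range]
  rintro _ ⟨j, hj, c, hc, rfl⟩
  rw [← iterate_succ_apply' f j c]
  rcases (Nat.succ_le_of_lt hj).lt_or_eq with hlt | rfl
  · exact ⟨j + 1, hlt, c, hc, rfl⟩
  · exact ⟨0, j.succ_pos, _, hret ⟨c, hc, rfl⟩, rfl⟩

theorem notMem_of_mapsTo_of_backward_orbit {α : Type*} {f : α → α} {s : Set α}
    (hs : MapsTo f s s) {y : ℕ → α} (hy : ∀ k, f (y (k + 1)) = y k) (h₀ : y 0 ∉ s) :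
    ∀ k, y k ∉ s
  | 0 => h₀
  | k + 1 => fun h => notMem_of_mapsTo_of_backward_orbit hs hy h₀ k (hy k ▸ hs h)

theorem stmt7_general {M : Type*} [MetricSpace M] [CompactSpace M]
    [MeasurableSpace M] [BorelSpace M]
    (f : M → M) (hf : Continuous f) (hbij : Function.Bijective f)
    (ν : Measure M)
    (huniq : ∀ μ : Measure M, IsProbabilityMeasure μ → MeasurePreserving f μ μ → μ = ν)
    (I : Set M) (hIo : IsOpen I)
    (p : ℕ) (hp : 1 ≤ p)
    (hret : f^[p] '' closure I ⊆ I)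
    (hK : (⋃ j ∈ Finset.range p, f^[j] '' closure I) ≠ Set.univ)
    (hνI : 0 < ν I) :
    False := by
  set K := ⋃ j ∈ Finset.range p, f^[j] '' closure I
  have hIK : I ⊆ K := fun x hx =>
    mem_biUnion (Finset.mem_range.2 hp) ⟨x, subset_closure hx, rfl⟩
  obtain ⟨x, hx⟩ := (ne_univ_iff_exists_notMem K).1 hK
  let e : M ≃ₜ M := hf.homeoOfEquivCompactToT2 (f := Equiv.ofBijective f hbij)
  let y : ℕ → M := fun k => e.symm^[k] x
  have hy : ∀ k, e (y (k + 1)) = y k := fun k => by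
    simp only [y, iterate_succ_apply', Homeomorph.apply_symm_apply]
  have hyK := notMem_of_mapsTo_of_backward_orbit
    (mapsTo_biUnion_iterate_image (hret.trans subset_closure)) hy hx
  have h𝒰 : (hyperfilter ℕ : Filter ℕ) ≤ atTop :=
    Nat.cofinite_eq_atTop ▸ hyperfilter_le_cofinite
  have hadd := ultraDensity_union_of_disjoint y (hyperfilter ℕ)
  let μ := (Content.ofAdditive _ hadd).measure
  have hμ : IsProbabilityMeasure μ :=
    ⟨(Content.measure_ofAdditive_univ hadd).trans (by simp [ultraDensity_univ y h𝒰])⟩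
  have hμf : MeasurePreserving f μ μ := Content.measurePreserving_ofAdditive hadd e
    (ultraDensity_image_of_backward_orbit y h𝒰 e.injective hy)
  have hμI : μ I = 0 := nonpos_iff_eq_zero.1 <|
    (Content.measure_ofAdditive_le_of_isOpen hadd hIo).trans
      (by simp [ultraDensity_of_forall_notMem y _ fun k hk => hyK k (hIK hk)])
  exact hνI.ne' (huniq μ hμ hμf ▸ hμI)

/-- A homeomorphism of a compact metric space admitting a periodic shrinking set `I` whose
orbit `K = ⋃_{j<p} f^j(closure I)` is not all of `M`, and whose (putative unique) invariant
measure gives `I` positive mass, cannot be uniquely ergodic. -/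
theorem stmt7 {M : Type*} [MetricSpace M] [CompactSpace M]
    [MeasurableSpace M] [BorelSpace M]
    (f : M → M) (hf : Continuous f) (hbij : Function.Bijective f)
    (ν : Measure M) (hν : IsProbabilityMeasure ν)
    (hinv : MeasurePreserving f ν ν)
    (huniq : ∀ μ : Measure M, IsProbabilityMeasure μ → MeasurePreserving f μ μ → μ = ν)
    (I : Set M) (hIo : IsOpen I) (hIne : I.Nonempty)
    (p : ℕ) (hp : 1 ≤ p)
    (hdisj : ∀ i j, i < p → j < p → i ≠ j →
      Disjoint (f^[i] '' closure I) (f^[j] '' closure I))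
    (hret : f^[p] '' closure I ⊆ I)
    (hK : (⋃ j ∈ Finset.range p, f^[j] '' closure I) ≠ Set.univ)
    (hνI : 0 < ν I) :
    False :=
  stmt7_general f hf hbij ν huniq I hIo p hp hret hK hνI
end

section
/- Let f : M → M be continuous on a compact metric space and let μ be an f-invariant probability measure with the following property (μ is infinitely shrinked): for every q ≥ 1 there exists a periodic shrinking set I_q of period p_q with diam(I_q) < 1/q such that μ(∪_{j=0}^{p_q −1} f^j(Ī_q)) = 1. Then μ is ergodic. -/
open MeasureTheory Filter Topology Metric Set Function
open scoped ENNReal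

/-- If two measures agree on families of small-diameter measurable pieces whose union has
full `ρ`-measure, then `ρ U ≤ σ U` for every open `U`. -/
private lemma approx_le13 {M : Type*} [MetricSpace M] [CompactSpace M]
    [MeasurableSpace M] [BorelSpace M]
    (ρ σ : Measure M)
    (h : ∀ ε : ℝ, 0 < ε → ∃ (m : ℕ) (A : ℕ → Set M),
      (∀ j, j < m → MeasurableSet (A j)) ∧
      (∀ i j, i < m → j < m → i ≠ j → Disjoint (A i) (A j)) ∧
      (∀ j, j < m → diam (A j) < ε) ∧
      ρ (⋃ j ∈ Finset.range m, A j)ᶜ = 0 ∧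
      (∀ j, j < m → ρ (A j) = σ (A j)))
    {U : Set M} (hU : IsOpen U) : ρ U ≤ σ U := by
  classical
  set C : ℕ → Set M := fun n => {x | x ∈ U ∧ ∀ y, dist x y < 1 / (n + 1) → y ∈ U} with hC
  have hmono : Monotone C := by
    intro a b hab x hx
    refine ⟨hx.1, fun y hy => hx.2 y (lt_of_lt_of_le hy ?_)⟩
    apply one_div_le_one_div_of_le (by positivity)
    have : (a : ℝ) ≤ b := by exact_mod_cast hab
    linarith
  have hCU : U = ⋃ n, C n := by
    apply Subset.antisymm
    · intro x hx
      obtain ⟨r, hr, hball⟩ := Metric.isOpen_iff.1 hU x hx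
      obtain ⟨n, hn⟩ := exists_nat_one_div_lt hr
      refine mem_iUnion.2 ⟨n, hx, fun y hy => hball ?_⟩
      rw [mem_ball, dist_comm]
      exact hy.trans hn
    · exact iUnion_subset fun n x hx => hx.1
  rw [hCU, hmono.measure_iUnion]
  refine iSup_le fun n => ?_
  obtain ⟨m, A, hmeas, hdisj, hdiam, hnull, heq⟩ := h (1 / (n + 1)) (by positivity)
  set S : Finset ℕ := (Finset.range m).filter fun j => (A j ∩ C n).Nonempty with hS
  have hmemS : ∀ j ∈ S, j < m := fun j hj =>
    Finset.mem_range.1 (Finset.mem_filter.1 hj).1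
  have hsub : ∀ j ∈ S, A j ⊆ U := by
    intro j hj y hy
    obtain ⟨x, hxA, hxC⟩ := (Finset.mem_filter.1 hj).2
    have hb : Bornology.IsBounded (A j) := (isCompact_univ.isBounded).subset (subset_univ _)
    exact hxC.2 y (lt_of_le_of_lt (dist_le_diam_of_mem hb hxA hy) (hdiam j (hmemS j hj)))
  have hkey : C n ⊆ (⋃ j ∈ S, A j) ∪ (⋃ j ∈ Finset.range m, A j)ᶜ := by
    intro x hx
    by_cases hxm : x ∈ ⋃ j ∈ Finset.range m, A j
    · obtain ⟨j, hj, hxA⟩ := mem_iUnion₂.1 hxm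
      exact Or.inl (mem_iUnion₂.2 ⟨j, Finset.mem_filter.2 ⟨hj, ⟨x, hxA, hx⟩⟩, hxA⟩)
    · exact Or.inr hxm
  have hdS : (S : Set ℕ).PairwiseDisjoint A := fun i hi j hj hij =>
    hdisj i j (hmemS i hi) (hmemS j hj) hij
  have hmS : ∀ j ∈ S, MeasurableSet (A j) := fun j hj => hmeas j (hmemS j hj)
  calc ρ (C n) ≤ ρ ((⋃ j ∈ S, A j) ∪ (⋃ j ∈ Finset.range m, A j)ᶜ) := measure_mono hkey
    _ ≤ ρ (⋃ j ∈ S, A j) + ρ ((⋃ j ∈ Finset.range m, A j)ᶜ) := measure_union_le _ _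
    _ = ∑ j ∈ S, ρ (A j) := by rw [hnull, add_zero, measure_biUnion_finset hdS hmS]
    _ = ∑ j ∈ S, σ (A j) := Finset.sum_congr rfl fun j hj => heq j (hmemS j hj)
    _ = σ (⋃ j ∈ S, A j) := (measure_biUnion_finset hdS hmS).symm
    _ ≤ σ (⋃ n, C n) := measure_mono ((iUnion₂_subset hsub).trans hCU.subset)

/-- The equidistribution on the pieces of a periodic shrinking-type set:
any invariant set gives measure `μ s / p` to each piece. -/
private lemma pieces13 {M : Type*} [MetricSpace M]
    [MeasurableSpace M] [BorelSpace M]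
    (f : M → M) (hf : Continuous f) (μ : Measure M) [IsProbabilityMeasure μ]
    (hinv : MeasurePreserving f μ μ)
    (K : Set M) (hK : IsCompact K) (p : ℕ) (hp : 1 ≤ p)
    (hret : f^[p] '' K ⊆ K)
    (hdisj : ∀ i j, i < p → j < p → i ≠ j → Disjoint (f^[i] '' K) (f^[j] '' K))
    (hfull : μ (⋃ j ∈ Finset.range p, f^[j] '' K) = 1)
    (s : Set M) (hs : MeasurableSet s) (hsinv : f ⁻¹' s = s) :
    ∀ j < p, μ (s ∩ f^[j] '' K) = μ s / p := by
  have hKm : ∀ j : ℕ, MeasurableSet (f^[j] '' K) := fun j =>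
    ((hK.image (hf.iterate j)).isClosed).measurableSet
  set a : ℕ → ℝ≥0∞ := fun j => μ (s ∩ f^[j] '' K) with ha
  have hstep : ∀ j, a j ≤ a (j + 1) := by
    intro j
    have hsub : s ∩ f^[j] '' K ⊆ f ⁻¹' (s ∩ f^[j + 1] '' K) := by
      rintro x ⟨hxs, hxK⟩
      have hfs : f x ∈ s := by rw [← hsinv] at hxs; exact hxs
      obtain ⟨z, hz, hzx⟩ := hxK
      exact ⟨hfs, ⟨z, hz, by rw [iterate_succ_apply', hzx]⟩⟩
    calc a j ≤ μ (f ⁻¹' (s ∩ f^[j + 1] '' K)) := measure_mono hsub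
      _ = a (j + 1) := hinv.measure_preimage (hs.inter (hKm (j + 1))).nullMeasurableSet
  have hmonoa : Monotone a := monotone_nat_of_le_succ hstep
  have hK0 : f^[0] '' K = K := by simp
  have hpa : a p ≤ a 0 := by
    have : s ∩ f^[p] '' K ⊆ s ∩ f^[0] '' K := by
      rw [hK0]; exact inter_subset_inter_right _ hret
    exact measure_mono this
  have hconst : ∀ j < p, a j = a 0 := fun j hj =>
    le_antisymm ((hmonoa hj.le).trans hpa) (hmonoa (Nat.zero_le j))
  have hUm : MeasurableSet (⋃ j ∈ Finset.range p, f^[j] '' K) :=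
    MeasurableSet.biUnion (Finset.range p).countable_toSet fun j _ => hKm j
  have hcompl : μ (⋃ j ∈ Finset.range p, f^[j] '' K)ᶜ = 0 := by
    rw [measure_compl hUm (measure_ne_top μ _), hfull, measure_univ, tsub_self]
  have hsum : ∑ j ∈ Finset.range p, a j = μ s := by
    have hd : ((Finset.range p : Finset ℕ) : Set ℕ).PairwiseDisjoint
        fun j => s ∩ f^[j] '' K := fun i hi j hj hij =>
      ((hdisj i j (Finset.mem_range.1 hi) (Finset.mem_range.1 hj) hij).mono
        inter_subset_right inter_subset_right)
    have hm : ∀ j ∈ Finset.range p, MeasurableSet (s ∩ f^[j] '' K) := fun j _ =>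
      hs.inter (hKm j)
    rw [ha]
    rw [← measure_biUnion_finset hd hm]
    have hEq : (⋃ j ∈ Finset.range p, s ∩ f^[j] '' K)
        = s ∩ ⋃ j ∈ Finset.range p, f^[j] '' K := by
      rw [inter_iUnion₂]
    rw [hEq, measure_inter_conull hcompl]
  have hpne : (p : ℝ≥0∞) ≠ 0 := Nat.cast_ne_zero.2 (by omega)
  have hkey : (p : ℝ≥0∞) * a 0 = μ s := by
    rw [← hsum, Finset.sum_congr rfl fun j hj => hconst j (Finset.mem_range.1 hj)]
    simp [mul_comm]
  intro j hj
  have : a j = μ s / p := by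
    rw [hconst j hj]
    exact (ENNReal.eq_div_iff hpne (ENNReal.natCast_ne_top p)).2 hkey
  exact this

/-- An infinitely shrinked invariant measure is ergodic. -/
theorem stmt13 {M : Type*} [MetricSpace M] [CompactSpace M]
    [MeasurableSpace M] [BorelSpace M]
    (f : M → M) (hf : Continuous f)
    (μ : Measure M) (hμ : IsProbabilityMeasure μ)
    (hinv : MeasurePreserving f μ μ)
    -- μ is infinitely shrinked
    (hshr : ∀ q : ℕ, 1 ≤ q → ∃ (I : Set M) (p : ℕ),
      IsOpen I ∧ I.Nonempty ∧ IsCompact (closure I) ∧ 1 ≤ p ∧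
      (∀ i j, i < p → j < p → i ≠ j →
        Disjoint (f^[i] '' closure I) (f^[j] '' closure I)) ∧
      f^[p] '' closure I ⊆ I ∧
      (∀ j, 1 ≤ j → j ≤ p - 1 → diam (f^[j] '' I) < diam I) ∧
      diam I < 1 / q ∧
      μ (⋃ j ∈ Finset.range p, f^[j] '' closure I) = 1) :
    Ergodic f μ := by
  refine ⟨hinv, ⟨fun s hs hsinv => ?_⟩⟩
  -- The family of pieces, for each ε > 0.
  have fam : ∀ ε : ℝ, 0 < ε → ∃ (m : ℕ) (A : ℕ → Set M),
      (∀ j, j < m → MeasurableSet (A j)) ∧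
      (∀ i j, i < m → j < m → i ≠ j → Disjoint (A i) (A j)) ∧
      (∀ j, j < m → diam (A j) < ε) ∧
      μ (⋃ j ∈ Finset.range m, A j)ᶜ = 0 ∧
      (∀ j, j < m → μ.restrict s (A j) = (μ s • μ) (A j)) := by
    intro ε hε
    obtain ⟨q0, hq0⟩ := exists_nat_one_div_lt hε
    obtain ⟨I, p, hIopen, hIne, hIc, hp, hdisj, hret, hdiam, hsmall, hfull⟩ :=
      hshr (q0 + 1) (Nat.le_add_left 1 q0)
    have hretK : f^[p] '' closure I ⊆ closure I := hret.trans subset_closure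
    have hqcast : ((q0 + 1 : ℕ) : ℝ) = (q0 : ℝ) + 1 := by push_cast; ring
    have hsmall' : diam I < ε := by
      rw [hqcast] at hsmall
      exact hsmall.trans hq0
    refine ⟨p, fun j => f^[j] '' closure I, ?_, hdisj, ?_, ?_, ?_⟩
    · intro j _
      exact ((hIc.image (hf.iterate j)).isClosed).measurableSet
    · -- diameters
      intro j hj
      rcases Nat.eq_zero_or_pos j with rfl | hj1
      · simpa [Metric.diam, EMetric.diam_closure] using hsmall'
      · have h1 : f^[j] '' closure I ⊆ closure (f^[j] '' I) :=
          image_closure_subset_closure_image (hf.iterate j)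
        have hb : Bornology.IsBounded (closure (f^[j] '' I)) :=
          (isCompact_univ.isBounded).subset (subset_univ _)
        have h2 : diam (f^[j] '' closure I) ≤ diam (closure (f^[j] '' I)) := diam_mono h1 hb
        have h3 : diam (closure (f^[j] '' I)) = diam (f^[j] '' I) := by
          simp [Metric.diam, EMetric.diam_closure]
        have h4 : diam (f^[j] '' I) < diam I := hdiam j hj1 (Nat.le_pred_of_lt hj)
        calc diam (f^[j] '' closure I) ≤ diam (f^[j] '' I) := h3 ▸ h2
          _ < diam I := h4
          _ < ε := hsmall'
    · -- null complement
      have hUm : MeasurableSet (⋃ j ∈ Finset.range p, f^[j] '' closure I) :=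
        MeasurableSet.biUnion (Finset.range p).countable_toSet fun j _ =>
          ((hIc.image (hf.iterate j)).isClosed).measurableSet
      rw [measure_compl hUm (measure_ne_top μ _), hfull, measure_univ, tsub_self]
    · -- measures agree on pieces
      intro j hj
      have h1 := pieces13 f hf μ hinv (closure I) hIc p hp hretK hdisj hfull s hs hsinv j hj
      have h2 := pieces13 f hf μ hinv (closure I) hIc p hp hretK hdisj hfull univ
        MeasurableSet.univ (preimage_univ) j hj
      rw [univ_inter, measure_univ] at h2
      rw [Measure.restrict_apply' hs, inter_comm, h1, Measure.smul_apply, smul_eq_mul, h2,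
        ENNReal.div_eq_inv_mul, ENNReal.div_eq_inv_mul, mul_one, mul_comm]
  -- The two measures agree.
  haveI : IsFiniteMeasure (μ s • μ) :=
    ⟨by rw [Measure.smul_apply, smul_eq_mul, measure_univ, mul_one]; exact measure_lt_top μ s⟩
  have key : μ.restrict s = μ s • μ := by
    have hgen : (inferInstance : MeasurableSpace M) = .generateFrom {U : Set M | IsOpen U} :=
      BorelSpace.measurable_eq
    have h1 : ∀ U : Set M, IsOpen U → μ.restrict s U ≤ (μ s • μ) U := by
      intro U hU
      refine approx_le13 _ _ (fun ε hε => ?_) hU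
      obtain ⟨m, A, ha, hb, hc, hd, he⟩ := fam ε hε
      refine ⟨m, A, ha, hb, hc, ?_, he⟩
      rw [Measure.restrict_apply' hs]
      exact measure_inter_null_of_null_left _ hd
    have h2 : ∀ U : Set M, IsOpen U → (μ s • μ) U ≤ μ.restrict s U := by
      intro U hU
      refine approx_le13 _ _ (fun ε hε => ?_) hU
      obtain ⟨m, A, ha, hb, hc, hd, he⟩ := fam ε hε
      exact ⟨m, A, ha, hb, hc, by rw [Measure.smul_apply, smul_eq_mul, hd, mul_zero],
        fun j hj => (he j hj).symm⟩
    refine ext_of_generate_finite _ hgen isPiSystem_isOpen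
      (fun U hU => le_antisymm (h1 U hU) (h2 U hU))
      (le_antisymm (h1 _ isOpen_univ) (h2 _ isOpen_univ))
  -- Evaluate at s.
  have hss : μ s = μ s * μ s := by
    have := congrArg (fun ν : Measure M => ν s) key
    simpa [Measure.restrict_apply' hs, Measure.smul_apply, smul_eq_mul] using this
  rw [eventuallyConst_set]
  rcases eq_or_ne (μ s) 0 with h0 | h0
  · refine Or.inr ?_
    have : sᶜ ∈ ae μ := by rw [mem_ae_iff, compl_compl]; exact h0
    exact this
  · refine Or.inl ?_
    have h1 : μ s = 1 := ENNReal.mul_eq_right h0 (measure_ne_top μ s) |>.1 hss.symm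
    have : s ∈ ae μ := by
      rw [mem_ae_iff, measure_compl hs (measure_ne_top μ _), measure_univ, h1, tsub_self]
    exact this
end

section
/- Let f : M → M be continuous on a compact metric space with the periodic shadowing property: for all ε > 0 there is δ > 0 such that every periodic δ-pseudo-orbit is ε-shadowed by a true periodic orbit. Then every ergodic f-invariant probability measure is a weak* limit of invariant measures supported on single periodic orbits; that is, E_f ⊆ closure(Per_f). -/
/-!
Fix an ergodic measure `μ`, finitely many test functions and `ε > 0`. By the mean ergodic
theorem the Birkhoff averages of the test functions converge to their integrals in measure.
For a ball `B` of positive measure, ergodicity makes the Cesàro averages of `μ (B ∩ f⁻ⁿ B)`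
converge to `μ B ^ 2 > 0`, so these return measures do not tend to zero; hence some `x ∈ B`
returns to `B` at a time `i` at which its averages are already good. Closing the orbit segment
`x, …, f^(i-1) x` gives a periodic pseudo-orbit, and by uniform continuity of the test functions
the orbit measure of a periodic point shadowing it is close to `μ` on the test functions.
-/

open MeasureTheory Filter Topology Metric Set Function
open scoped ENNReal NNReal BoundedContinuousFunction

open Finset in
theorem Function.Periodic.sum_range_mul {β : Type*} [AddCommMonoid β] {a : ℕ → β} {p : ℕ}
    (ha : Periodic a p) (k : ℕ) : ∑ l ∈ range (k * p), a l = k • ∑ l ∈ range p, a l := by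
  induction k with
  | zero => simp
  | succ k ih =>
    rw [add_mul, one_mul, sum_range_add, ih, succ_nsmul]
    congr 1
    refine sum_congr rfl fun l _ => ?_
    rw [add_comm]
    simpa using ha.nat_mul k l

open Finset in
theorem Function.Periodic.average_range_mul {a : ℕ → ℝ} {p : ℕ} (ha : Periodic a p) {k : ℕ}
    (hk : k ≠ 0) :
    ((k * p : ℕ) : ℝ)⁻¹ * ∑ l ∈ range (k * p), a l = (p : ℝ)⁻¹ * ∑ l ∈ range p, a l := by
  rw [ha.sum_range_mul, nsmul_eq_mul, Nat.cast_mul, mul_inv, mul_assoc, mul_left_comm,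
    inv_mul_cancel_left₀ (Nat.cast_ne_zero.mpr hk)]

open Finset in
theorem dist_average_le_of_periodic {a b : ℕ → ℝ} {p q : ℕ} (ha : Periodic a p)
    (hb : Periodic b q) (hp : p ≠ 0) (hq : q ≠ 0) {c : ℝ} (hab : ∀ l, dist (a l) (b l) ≤ c) :
    dist ((p : ℝ)⁻¹ * ∑ l ∈ range p, a l) ((q : ℝ)⁻¹ * ∑ l ∈ range q, b l) ≤ c := by
  rw [← ha.average_range_mul hq, ← hb.average_range_mul hp, Nat.mul_comm p q]
  set N := q * p
  have hN : (N : ℝ) ≠ 0 := by positivity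
  calc dist ((N : ℝ)⁻¹ * ∑ l ∈ range N, a l) ((N : ℝ)⁻¹ * ∑ l ∈ range N, b l)
      = (N : ℝ)⁻¹ * dist (∑ l ∈ range N, a l) (∑ l ∈ range N, b l) := by
        rw [Real.dist_eq, Real.dist_eq, ← mul_sub, abs_mul, abs_inv, Nat.abs_cast]
    _ ≤ (N : ℝ)⁻¹ * (N * c) := by
        gcongr
        refine (dist_sum_sum_le _ _ _).trans ?_
        simpa using sum_le_sum fun l (_ : l ∈ range N) => hab l
    _ = c := inv_mul_cancel_left₀ hN c

theorem dist_birkhoffAverage_le_of_isPeriodicPt {α : Type*} {f : α → α} {g : α → ℝ} {z x : α}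
    {m i : ℕ} (hz : IsPeriodicPt f m z) (hm : m ≠ 0) (hi : i ≠ 0) {c : ℝ}
    (h : ∀ n, dist (g (f^[n] z)) (g (f^[n % i] x)) ≤ c) :
    dist (birkhoffAverage ℝ f g m z) (birkhoffAverage ℝ f g i x) ≤ c := by
  have hx : birkhoffSum f g i x = ∑ n ∈ Finset.range i, g (f^[n % i] x) :=
    Finset.sum_congr rfl fun n hn => by rw [Nat.mod_eq_of_lt (Finset.mem_range.mp hn)]
  simp only [birkhoffAverage, hx, smul_eq_mul]
  exact dist_average_le_of_periodic (fun n => by simp only [iterate_add_apply, hz.eq])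
    (fun n => by simp only [Nat.add_mod_right]) hm hi h

theorem dist_iterate_mod_succ_lt {α : Type*} [PseudoMetricSpace α] {f : α → α} {x : α} {i : ℕ}
    {δ : ℝ} (hi : 0 < i) (hx : dist (f^[i] x) x < δ) (hδ : 0 < δ) (n : ℕ) :
    dist (f (f^[n % i] x)) (f^[(n + 1) % i] x) < δ := by
  rw [← iterate_succ_apply' f, Nat.succ_eq_add_one, ← Nat.mod_add_mod n i 1]
  rcases (Nat.add_one_le_of_lt (Nat.mod_lt n hi)).lt_or_eq with h | h
  · rwa [Nat.mod_eq_of_lt h, dist_self]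
  · rwa [h, Nat.mod_self]

noncomputable def empiricalMeasure {α : Type*} [MeasurableSpace α] (f : α → α) (x : α) (n : ℕ) :
    Measure α :=
  (n : ℝ≥0∞)⁻¹ • ∑ j ∈ Finset.range n, Measure.dirac (f^[j] x)

section empiricalMeasure

variable {α : Type*} [MeasurableSpace α] (f : α → α) (x : α) {n : ℕ}

theorem isProbabilityMeasure_empiricalMeasure (hn : n ≠ 0) :
    IsProbabilityMeasure (empiricalMeasure f x n) :=
  ⟨by simp [empiricalMeasure, ENNReal.inv_mul_cancel, hn]⟩

theorem integral_empiricalMeasure [MeasurableSingletonClass α] {E : Type*} [NormedAddCommGroup E]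
    [NormedSpace ℝ E] [CompleteSpace E] (g : α → E) (n : ℕ) :
    ∫ y, g y ∂(empiricalMeasure f x n) = birkhoffAverage ℝ f g n x := by
  rw [empiricalMeasure, integral_smul_measure,
    integral_finsetSum_measure fun j _ => integrable_dirac enorm_lt_top]
  simp [birkhoffAverage, birkhoffSum]

end empiricalMeasure

theorem ProbabilityMeasure.mem_closure_of_forall_dist_integral_lt {Ω : Type*} [TopologicalSpace Ω]
    [MeasurableSpace Ω] [OpensMeasurableSpace Ω] {S : Set (ProbabilityMeasure Ω)}
    {μ : ProbabilityMeasure Ω}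
    (h : ∀ (F : Finset (Ω →ᵇ ℝ)) (ε : ℝ), 0 < ε → ∃ ν ∈ S,
      ∀ g ∈ F, dist (∫ x, g x ∂(ν : Measure Ω)) (∫ x, g x ∂(μ : Measure Ω)) < ε) :
    μ ∈ closure S := by
  classical
  choose ν hνS hν using fun p : Finset (Ω →ᵇ ℝ) × ℕ =>
    h p.1 (1 / (p.2 + 1)) Nat.one_div_pos_of_nat
  refine mem_closure_of_tendsto (b := atTop) ?_ (Eventually.of_forall hνS)
  refine ProbabilityMeasure.tendsto_iff_forall_integral_tendsto.mpr fun g => ?_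
  refine Metric.tendsto_atTop.mpr fun ε hε => ?_
  obtain ⟨k, hk⟩ := exists_nat_one_div_lt hε
  refine ⟨({g}, k), fun p hp => ?_⟩
  calc dist _ _ < 1 / ((p.2 : ℝ) + 1) := hν p g (hp.1 (Finset.mem_singleton_self g))
    _ ≤ 1 / ((k : ℝ) + 1) := Nat.one_div_le_one_div hp.2
    _ < ε := hk

namespace MeasureTheory.MeasurePreserving

variable {α : Type*} [MeasurableSpace α] {μ : Measure α} {f : α → α}

noncomputable def koopman (hf : MeasurePreserving f μ μ) : Lp ℝ 2 μ →L[ℝ] Lp ℝ 2 μ :=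
  (Lp.compMeasurePreservingₗᵢ ℝ f hf).toContinuousLinearMap

variable (hf : MeasurePreserving f μ μ)

theorem norm_koopman_le : ‖hf.koopman‖ ≤ 1 :=
  LinearIsometry.norm_toContinuousLinearMap_le _

theorem koopman_iterate_apply (n : ℕ) (g : Lp ℝ 2 μ) :
    hf.koopman^[n] g = Lp.compMeasurePreserving f^[n] (hf.iterate n) g :=
  congrFun (Lp.compMeasurePreserving_iterate hf n) g

theorem koopman_const [IsFiniteMeasure μ] (c : ℝ) :
    hf.koopman (Lp.const 2 μ c) = Lp.const 2 μ c :=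
  rfl

theorem coeFn_birkhoffSum_koopman (n : ℕ) (g : Lp ℝ 2 μ) :
    ⇑(birkhoffSum hf.koopman (id : Lp ℝ 2 μ → Lp ℝ 2 μ) n g) =ᵐ[μ] birkhoffSum f g n := by
  induction n with
  | zero => simpa [birkhoffSum_zero'] using Lp.coeFn_zero ℝ 2 μ
  | succ n ih =>
    have hn : ⇑(hf.koopman^[n] g) =ᵐ[μ] g ∘ f^[n] := by
      rw [koopman_iterate_apply]; exact Lp.coeFn_compMeasurePreserving _ _
    filter_upwards [Lp.coeFn_add (birkhoffSum hf.koopman id n g) (hf.koopman^[n] g), ih, hn]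
      with x h₁ h₂ h₃
    simp only [birkhoffSum_succ, id, h₁, Pi.add_apply, h₂, h₃, comp_apply]

theorem coeFn_birkhoffAverage_koopman (n : ℕ) (g : Lp ℝ 2 μ) :
    ⇑(birkhoffAverage ℝ hf.koopman (id : Lp ℝ 2 μ → Lp ℝ 2 μ) n g) =ᵐ[μ]
      birkhoffAverage ℝ f g n := by
  filter_upwards [Lp.coeFn_smul (n : ℝ)⁻¹ (birkhoffSum hf.koopman id n g),
    hf.coeFn_birkhoffSum_koopman n g] with x h₁ h₂
  simp only [birkhoffAverage, h₁, Pi.smul_apply, h₂]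

end MeasureTheory.MeasurePreserving

theorem MeasureTheory.L2.inner_const_one_eq_integral {α : Type*} [MeasurableSpace α]
    {μ : Measure α} [IsFiniteMeasure μ] (g : Lp ℝ 2 μ) :
    inner ℝ (Lp.const 2 μ (1 : ℝ)) g = ∫ x, g x ∂μ := by
  rw [← indicatorConstLp_univ, L2.inner_indicatorConstLp_one, Measure.restrict_univ]

namespace Ergodic

variable {α : Type*} [MeasurableSpace α] {μ : Measure α} [IsProbabilityMeasure μ] {f : α → α}

theorem tendsto_birkhoffAverage_koopman (hμ : Ergodic f μ) (g : Lp ℝ 2 μ) :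
    Tendsto (birkhoffAverage ℝ hμ.toMeasurePreserving.koopman id · g) atTop
      (𝓝 (Lp.const 2 μ (∫ x, g x ∂μ))) := by
  set U := hμ.toMeasurePreserving.koopman
  set K := U.eqLocus (1 : Lp ℝ 2 μ →L[ℝ] Lp ℝ 2 μ)
  convert U.tendsto_birkhoffAverage_orthogonalProjection
    hμ.toMeasurePreserving.norm_koopman_le g using 2
  -- The projection `w` of `g` is invariant, hence constant by ergodicity; pairing with the
  -- invariant function `1` identifies the constant as `∫ g`.
  set w : Lp ℝ 2 μ := ↑(K.orthogonalProjectionOnto g)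
  obtain ⟨c, hc⟩ := hμ.eq_const_of_compMeasurePreserving_eq (g := w.1)
    (congrArg Subtype.val (K.orthogonalProjectionOnto g).2)
  have hw : w = Lp.const 2 μ c := Subtype.ext hc
  have hone : Lp.const 2 μ (1 : ℝ) ∈ K := hμ.toMeasurePreserving.koopman_const 1
  have hc_eq : c = ∫ x, g x ∂μ :=
    calc c = ∫ x, w x ∂μ := by rw [hw, integral_congr_ae (Lp.coeFn_const 2 μ c)]; simp
      _ = inner ℝ (Lp.const 2 μ (1 : ℝ)) g := by
        rw [← L2.inner_const_one_eq_integral]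
        exact K.inner_orthogonalProjectionOnto_eq_of_mem_left ⟨_, hone⟩ g
      _ = ∫ x, g x ∂μ := L2.inner_const_one_eq_integral g
  rw [← hc_eq, hw]

theorem tendstoInMeasure_birkhoffAverage (hμ : Ergodic f μ) {g : α → ℝ} (hg : MemLp g 2 μ) :
    TendstoInMeasure μ (birkhoffAverage ℝ f g) atTop (fun _ => ∫ x, g x ∂μ) := by
  have hf := hμ.toMeasurePreserving
  refine (tendstoInMeasure_of_tendsto_Lp (hμ.tendsto_birkhoffAverage_koopman (hg.toLp g))).congr
    (fun n => ?_) ?_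
  · exact (hf.coeFn_birkhoffAverage_koopman n _).trans
      (hf.quasiMeasurePreserving.birkhoffAverage_ae_eq_of_ae_eq ℝ hg.coeFn_toLp n)
  · rw [integral_congr_ae hg.coeFn_toLp]
    exact Lp.coeFn_const 2 μ _

theorem tendsto_average_measureReal_inter_preimage (hμ : Ergodic f μ) {s t : Set α}
    (hs : MeasurableSet s) (ht : MeasurableSet t) :
    Tendsto (fun n : ℕ => (n : ℝ)⁻¹ * ∑ i ∈ Finset.range n, μ.real (s ∩ f^[i] ⁻¹' t)) atTop
      (𝓝 (μ.real s * μ.real t)) := by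
  have hf := hμ.toMeasurePreserving
  -- `⟪1_s, U^[i] 1_t⟫ = μ.real (s ∩ f^[i] ⁻¹' t)` for the Koopman operator `U`
  have hlim := ((innerSL ℝ (indicatorConstLp 2 hs (measure_ne_top μ s) (1 : ℝ))).continuous.tendsto
    _).comp (hμ.tendsto_birkhoffAverage_koopman (indicatorConstLp 2 ht (measure_ne_top μ t) 1))
  convert hlim using 1
  · funext n
    simp [birkhoffAverage, birkhoffSum, hf.koopman_iterate_apply,
      Lp.indicatorConstLp_compMeasurePreserving, inner_sum, real_inner_smul_right,
      L2.real_inner_indicatorConstLp_one_indicatorConstLp_one]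
  · simp [integral_indicatorConstLp, ← indicatorConstLp_univ,
      L2.inner_indicatorConstLp_indicatorConstLp]

theorem not_tendsto_measure_inter_preimage_self_zero (hμ : Ergodic f μ) {s : Set α}
    (hs : MeasurableSet s) (h₀ : μ s ≠ 0) :
    ¬Tendsto (fun n => μ (s ∩ f^[n] ⁻¹' s)) atTop (𝓝 0) := fun h => by
  have hreal : Tendsto (fun n => μ.real (s ∩ f^[n] ⁻¹' s)) atTop (𝓝 0) :=
    (ENNReal.tendsto_toReal ENNReal.zero_ne_top).comp h
  have hpos : 0 < μ.real s := ENNReal.toReal_pos h₀ (measure_ne_top μ s)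
  exact (mul_pos hpos hpos).ne'
    (tendsto_nhds_unique (hμ.tendsto_average_measureReal_inter_preimage hs hs) hreal.cesaro)

theorem exists_almost_closed_orbit_with_birkhoffAverage_near_integral [PseudoMetricSpace α]
    [HereditarilyLindelofSpace α] [OpensMeasurableSpace α] (hμ : Ergodic f μ) {ι : Type*}
    [Finite ι] {g : ι → α → ℝ} (hg : ∀ j, MemLp (g j) 2 μ)
    {ε δ : ℝ} (hε : 0 < ε) (hδ : 0 < δ) :
    ∃ x i, 0 < i ∧ dist (f^[i] x) x < δ ∧
      ∀ j, dist (birkhoffAverage ℝ f (g j) i x) (∫ y, g j y ∂μ) < ε := by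
  cases nonempty_fintype ι
  obtain ⟨x₀, hx₀⟩ := Measure.nonempty_support (IsProbabilityMeasure.ne_zero μ)
  set B := ball x₀ (δ / 2)
  have hB : 0 < μ B := (Measure.mem_support_iff_forall x₀).1 hx₀ B (ball_mem_nhds x₀ (half_pos hδ))
  set bad : ι → ℕ → Set α := fun j n =>
    {x | ε ≤ dist (birkhoffAverage ℝ f (g j) n x) (∫ y, g j y ∂μ)}
  have hbad : Tendsto (fun n => μ (⋃ j, bad j n)) atTop (𝓝 0) := by
    have hsum : Tendsto (fun n => ∑ j, μ (bad j n)) atTop (𝓝 0) := by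
      simpa using tendsto_finsetSum Finset.univ fun j _ =>
        tendstoInMeasure_iff_dist.mp (hμ.tendstoInMeasure_birkhoffAverage (hg j)) ε hε
    exact tendsto_of_tendsto_of_tendsto_of_le_of_le tendsto_const_nhds hsum (fun _ => zero_le)
      fun n => measure_iUnion_fintype_le μ _
  -- Returns to `B` do not become negligible, while the sets of bad points do.
  obtain ⟨n, hn, hlt⟩ : ∃ n, 0 < n ∧ μ (⋃ j, bad j n) < μ (B ∩ f^[n] ⁻¹' B) := by
    by_contra! h
    exact hμ.not_tendsto_measure_inter_preimage_self_zero measurableSet_ball hB.ne' <|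
      tendsto_of_tendsto_of_tendsto_of_le_of_le' tendsto_const_nhds hbad
        (Eventually.of_forall fun _ => zero_le) (eventually_atTop.2 ⟨1, h⟩)
  obtain ⟨x, ⟨hxB, hfxB⟩, hxbad⟩ := not_subset.mp fun hsub => (measure_mono hsub).not_gt hlt
  refine ⟨x, n, hn, ?_, fun j => ?_⟩
  · calc dist (f^[n] x) x ≤ dist (f^[n] x) x₀ + dist x x₀ := dist_triangle_right _ _ _
      _ < δ / 2 + δ / 2 := add_lt_add hfxB hxB
      _ = δ := add_halves δ
  · simp only [bad, mem_iUnion, mem_ofPred_eq, not_exists, not_le] at hxbad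
    exact hxbad j

end Ergodic

theorem stmt15_general {M : Type*} [MetricSpace M] [CompactSpace M]
    [MeasurableSpace M] [BorelSpace M]
    (f : M → M)
    -- periodic shadowing property
    (hshadow : ∀ ε > (0 : ℝ), ∃ δ > (0 : ℝ), ∀ (y : ℕ → M) (p : ℕ), 0 < p →
      (∀ n, dist (f (y n)) (y (n + 1)) < δ) → (∀ n, y (n + p) = y n) →
      ∃ z : M, (∃ m : ℕ, 0 < m ∧ f^[m] z = z) ∧ ∀ n, dist (f^[n] z) (y n) < ε) :
    {μ : ProbabilityMeasure M | Ergodic f (μ : Measure M)} ⊆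
      closure {μ : ProbabilityMeasure M | ∃ (z : M) (r : ℕ), 0 < r ∧ f^[r] z = z ∧
        (μ : Measure M) = (r : ℝ≥0∞)⁻¹ • ∑ j ∈ Finset.range r, Measure.dirac (f^[j] z)} := by
  intro μ hμ
  refine ProbabilityMeasure.mem_closure_of_forall_dist_integral_lt fun F ε hε => ?_
  obtain ⟨η, hη, hFη⟩ := Metric.uniformEquicontinuous_iff.mp
    (uniformEquicontinuous_finite.mpr fun g : F =>
      CompactSpace.uniformContinuous_of_continuous (g : M →ᵇ ℝ).continuous) (ε / 2) (half_pos hε)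
  obtain ⟨δ, hδ, hshadowδ⟩ := hshadow η hη
  obtain ⟨x, i, hi, hxi, hx⟩ := hμ.exists_almost_closed_orbit_with_birkhoffAverage_near_integral
    (g := fun g : F => ⇑(g : M →ᵇ ℝ)) (fun g => (g : M →ᵇ ℝ).memLp_top.mono_exponent le_top)
    (half_pos hε) hδ
  obtain ⟨z, ⟨m, hm, hz⟩, hzx⟩ := hshadowδ (fun n => f^[n % i] x) i hi
    (dist_iterate_mod_succ_lt hi hxi hδ) fun n => by simp only [Nat.add_mod_right]
  refine ⟨⟨empiricalMeasure f z m, isProbabilityMeasure_empiricalMeasure f z hm.ne'⟩,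
    ⟨z, m, hm, hz, rfl⟩, fun g hg => ?_⟩
  calc dist (∫ y, g y ∂(empiricalMeasure f z m)) (∫ y, g y ∂(μ : Measure M))
      ≤ dist (birkhoffAverage ℝ f g m z) (birkhoffAverage ℝ f g i x)
        + dist (birkhoffAverage ℝ f g i x) (∫ y, g y ∂(μ : Measure M)) := by
        rw [integral_empiricalMeasure]
        exact dist_triangle _ _ _
    _ < ε / 2 + ε / 2 := add_lt_add_of_le_of_lt
        (dist_birkhoffAverage_le_of_isPeriodicPt hz hm.ne' hi.ne' fun n =>
          (hFη _ _ (hzx n) ⟨g, hg⟩).le)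
        (hx ⟨g, hg⟩)
    _ = ε := add_halves ε

/-- If `f` has the periodic shadowing property, then every ergodic invariant probability
measure lies in the weak* closure of the set of invariant measures supported on single
periodic orbits. -/
theorem stmt15 {M : Type*} [MetricSpace M] [CompactSpace M]
    [MeasurableSpace M] [BorelSpace M]
    (f : M → M) (hf : Continuous f)
    -- periodic shadowing property
    (hshadow : ∀ ε > (0 : ℝ), ∃ δ > (0 : ℝ), ∀ (y : ℕ → M) (p : ℕ), 0 < p →
      (∀ n, dist (f (y n)) (y (n + 1)) < δ) → (∀ n, y (n + p) = y n) →
      ∃ z : M, (∃ m : ℕ, 0 < m ∧ f^[m] z = z) ∧ ∀ n, dist (f^[n] z) (y n) < ε) :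
    {μ : ProbabilityMeasure M | Ergodic f (μ : Measure M)} ⊆
      closure {μ : ProbabilityMeasure M | ∃ (z : M) (r : ℕ), 0 < r ∧ f^[r] z = z ∧
        (μ : Measure M) = (r : ℝ≥0∞)⁻¹ • ∑ j ∈ Finset.range r, Measure.dirac (f^[j] z)} :=
  stmt15_general f hshadow
end

section
/- Let M be a compact metric space with a Borel probability measure Leb, and let f : M → M be continuous. Define AA₁ := {x ∈ M : the empirical measures of x converge weakly* to a limit μ_x, and μ_x is pseudo-physical}. If Leb(AA₁) = 1, then the set O_f of pseudo-physical measures equals the weak* closure of {μ_x : x ∈ AA₁}. -/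
/-! Let `μ` be pseudo-physical and `ε > 0`. The set `{x : d(pω(x), μ) < ε/2}` has positive
outer measure but need not be measurable; it lies in the Borel set `U` of points whose empirical
measures come `ε/2`-close to `μ` infinitely often (the empirical distances are continuous in `x`).
As `AA₁` has full measure it meets `U`, and at such an `x` the empirical measures converge to
`μ_x`, so `d(μ_x, μ) ≤ ε/2`. Conversely, if `d(μ_x, μ) < ε/2`, the triangle inequality for `d`
gives `{x : d(pω(x), μ_x) < ε/2} ⊆ {x : d(pω(x), μ) < ε}`. -/

open MeasureTheory Filter Topology Metric Set Function

/-- Convergence of the empirical measures along the orbit of `x` to `μ` in the weak*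
topology. -/
def empConv {M : Type*} [MetricSpace M] [MeasurableSpace M] [BorelSpace M]
    (f : M → M) (x : M) (μ : MeasureTheory.Measure M) : Prop :=
  ∀ g : M → ℝ, Continuous g →
    Filter.Tendsto (fun n : ℕ => (n : ℝ)⁻¹ * ∑ j ∈ Finset.range n, g (f^[j] x))
      Filter.atTop (nhds (∫ y, g y ∂μ))

/-- The set `pω(x)` of weak* limit points of the empirical measures along the orbit of `x`. -/
def pOmega {M : Type*} [MetricSpace M] [MeasurableSpace M] [BorelSpace M]
    (f : M → M) (x : M) : Set (MeasureTheory.Measure M) :=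
  {ν | MeasureTheory.IsProbabilityMeasure ν ∧ ∃ φ : ℕ → ℕ, StrictMono φ ∧
    ∀ g : M → ℝ, Continuous g →
      Filter.Tendsto
        (fun n : ℕ => ((φ n : ℝ))⁻¹ * ∑ j ∈ Finset.range (φ n), g (f^[j] x)) Filter.atTop
        (nhds (∫ y, g y ∂ν))}

/-- `μ` is pseudo-physical: for every `ε > 0`, the set of points `x` with
`d(pω(x), μ) < ε` has positive Lebesgue measure. -/
def pseudoPhysical {M : Type*} [MetricSpace M] [MeasurableSpace M] [BorelSpace M]
    (Leb : MeasureTheory.Measure M) (f : M → M) (Ψ : ℕ → M → ℝ)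
    (μ : MeasureTheory.Measure M) : Prop :=
  MeasureTheory.IsProbabilityMeasure μ ∧
    ∀ ε > (0 : ℝ), 0 < Leb {x | ∃ ν ∈ pOmega f x, wd Ψ ν μ < ε}

lemma summable_half_pow_succ : Summable fun i : ℕ => (1 / 2 : ℝ) ^ (i + 1) := by
  simpa [pow_succ] using summable_geometric_two.mul_right (1 / 2 : ℝ)

lemma summable_half_pow_mul_abs {a : ℕ → ℝ} (ha : ∀ i, |a i| ≤ 1) :
    Summable fun i : ℕ => (1 / 2 : ℝ) ^ (i + 1) * |a i| :=
  summable_half_pow_succ.of_nonneg_of_le (fun i => by positivity)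
    fun i => mul_le_of_le_one_right (by positivity) (ha i)

lemma norm_half_pow_mul_abs_le {a : ℝ} (ha : |a| ≤ 1) (i : ℕ) :
    ‖(1 / 2 : ℝ) ^ (i + 1) * |a|‖ ≤ (1 / 2 : ℝ) ^ (i + 1) := by
  rw [Real.norm_of_nonneg (by positivity)]
  exact mul_le_of_le_one_right (by positivity) ha

lemma abs_sub_le_one_of_mem_Icc {a b : ℝ} (ha : a ∈ Icc (0 : ℝ) 1) (hb : b ∈ Icc (0 : ℝ) 1) :
    |a - b| ≤ 1 := by
  simpa using abs_sub_le_of_le_of_le ha.1 ha.2 hb.1 hb.2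

lemma integral_mem_Icc_zero_one {X : Type*} [MeasurableSpace X] (κ : Measure X)
    [IsProbabilityMeasure κ] {g : X → ℝ} (hg : ∀ x, g x ∈ Icc (0 : ℝ) 1) :
    ∫ x, g x ∂κ ∈ Icc (0 : ℝ) 1 := by
  refine ⟨integral_nonneg fun x => (hg x).1, ?_⟩
  calc ∫ x, g x ∂κ ≤ ∫ _, (1 : ℝ) ∂κ :=
        integral_mono_of_nonneg (.of_forall fun x => (hg x).1) (integrable_const 1)
          (.of_forall fun x => (hg x).2)
    _ = 1 := by simp

lemma birkhoffAverage_mem_Icc_zero_one {X : Type*} (f : X → X) {g : X → ℝ}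
    (hg : ∀ x, g x ∈ Icc (0 : ℝ) 1) (n : ℕ) (x : X) :
    birkhoffAverage ℝ f g n x ∈ Icc (0 : ℝ) 1 := by
  rcases Nat.eq_zero_or_pos n with rfl | hn
  · simp
  have hsum : birkhoffSum f g n x ≤ n := by
    calc birkhoffSum f g n x ≤ ∑ _j ∈ Finset.range n, (1 : ℝ) :=
          Finset.sum_le_sum fun j _ => (hg _).2
      _ = n := by simp
  refine ⟨smul_nonneg (by positivity) (Finset.sum_nonneg fun j _ => (hg _).1), ?_⟩
  rwa [birkhoffAverage, smul_eq_mul, inv_mul_le_iff₀ (by exact_mod_cast hn), mul_one]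

lemma abs_birkhoffAverage_sub_integral_le_one {X : Type*} [MeasurableSpace X] {g : X → ℝ}
    (hg : ∀ x, g x ∈ Icc (0 : ℝ) 1) (f : X → X) (μ : Measure X) [IsProbabilityMeasure μ]
    (n : ℕ) (x : X) :
    |birkhoffAverage ℝ f g n x - ∫ y, g y ∂μ| ≤ 1 :=
  abs_sub_le_one_of_mem_Icc (birkhoffAverage_mem_Icc_zero_one f hg n x)
    (integral_mem_Icc_zero_one μ hg)

lemma measurableSet_setOf_frequently_lt {X : Type*} [MeasurableSpace X] {D : ℕ → X → ℝ}
    (hD : ∀ n, Measurable (D n)) (r : ℝ) :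
    MeasurableSet {x | ∃ᶠ n in atTop, D n x < r} := by
  have : {x | ∃ᶠ n in atTop, D n x < r} = limsup (fun n => {x | D n x < r}) atTop := by
    ext x
    simp [mem_limsup_iff_frequently_mem]
  rw [this]
  exact MeasurableSet.measurableSet_limsup fun n => measurableSet_lt (hD n) measurable_const

lemma nonempty_inter_of_measure_eq_one {X : Type*} [MeasurableSpace X] {μ : Measure X}
    [IsProbabilityMeasure μ] {s t : Set X} (hs : μ s = 1) (ht : MeasurableSet t)
    (ht0 : 0 < μ t) : (s ∩ t).Nonempty :=
  nonempty_inter_of_measure_lt_add μ ht (subset_univ s) (subset_univ t) <| by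
    rw [measure_univ, hs]
    exact ENNReal.lt_add_right ENNReal.one_ne_top ht0.ne'

section EmpiricalDistance

variable {M : Type*} [MetricSpace M] [MeasurableSpace M] {Ψ : ℕ → M → ℝ}

lemma wd_triangle (hΨ01 : ∀ i x, Ψ i x ∈ Icc (0 : ℝ) 1) (a b c : Measure M)
    [IsProbabilityMeasure a] [IsProbabilityMeasure b] [IsProbabilityMeasure c] :
    wd Ψ a c ≤ wd Ψ a b + wd Ψ b c := by
  have habs : ∀ (κ κ' : Measure M) [IsProbabilityMeasure κ] [IsProbabilityMeasure κ'] (i : ℕ),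
      |(∫ x, Ψ i x ∂κ) - ∫ x, Ψ i x ∂κ'| ≤ 1 := fun κ κ' _ _ i =>
    abs_sub_le_one_of_mem_Icc (integral_mem_Icc_zero_one κ (hΨ01 i))
      (integral_mem_Icc_zero_one κ' (hΨ01 i))
  have hab := summable_half_pow_mul_abs (habs a b)
  have hbc := summable_half_pow_mul_abs (habs b c)
  rw [wd, wd, wd, ← hab.tsum_add hbc]
  refine (summable_half_pow_mul_abs (habs a c)).tsum_le_tsum (fun i => ?_) (hab.add hbc)
  rw [← mul_add]
  exact mul_le_mul_of_nonneg_left (abs_sub_le _ _ _) (by positivity)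

/-- `d((1/n) ∑_{j<n} δ_{f^j x}, μ)`, written without forming the empirical measure. -/
noncomputable def empiricalWd (Ψ : ℕ → M → ℝ) (f : M → M) (μ : Measure M) (n : ℕ) (x : M) : ℝ :=
  ∑' i : ℕ, (1 / 2 : ℝ) ^ (i + 1) * |birkhoffAverage ℝ f (Ψ i) n x - ∫ y, Ψ i y ∂μ|

variable {f : M → M} {μ ν : Measure M} [IsProbabilityMeasure μ] {x : M}

lemma continuous_empiricalWd (hΨc : ∀ i, Continuous (Ψ i))
    (hΨ01 : ∀ i x, Ψ i x ∈ Icc (0 : ℝ) 1) (hf : Continuous f) (n : ℕ) :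
    Continuous (empiricalWd Ψ f μ n) := by
  refine continuous_tsum (fun i => ?_) summable_half_pow_succ fun i x =>
    norm_half_pow_mul_abs_le (abs_birkhoffAverage_sub_integral_le_one (hΨ01 i) f μ n x) i
  have hB : Continuous (birkhoffAverage ℝ f (Ψ i) n) :=
    continuous_const.mul (continuous_finsetSum _ fun j _ => (hΨc i).comp (hf.iterate j))
  exact continuous_const.mul ((hB.sub continuous_const).abs)

lemma tendsto_empiricalWd (hΨ01 : ∀ i x, Ψ i x ∈ Icc (0 : ℝ) 1) {ι : Type*} {l : Filter ι}
    {u : ι → ℕ}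
    (hu : ∀ i, Tendsto (fun m => birkhoffAverage ℝ f (Ψ i) (u m) x) l (𝓝 (∫ y, Ψ i y ∂ν))) :
    Tendsto (fun m => empiricalWd Ψ f μ (u m) x) l (𝓝 (wd Ψ ν μ)) :=
  tendsto_tsum_of_dominated_convergence summable_half_pow_succ
    (fun i => (((hu i).sub tendsto_const_nhds).abs).const_mul _)
    (.of_forall fun m i =>
      norm_half_pow_mul_abs_le (abs_birkhoffAverage_sub_integral_le_one (hΨ01 i) f μ (u m) x) i)

variable [BorelSpace M]

lemma frequently_empiricalWd_lt_of_mem_pOmega (hΨc : ∀ i, Continuous (Ψ i))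
    (hΨ01 : ∀ i x, Ψ i x ∈ Icc (0 : ℝ) 1) {r : ℝ} (hν : ν ∈ pOmega f x) (hr : wd Ψ ν μ < r) :
    ∃ᶠ n in atTop, empiricalWd Ψ f μ n x < r := by
  obtain ⟨-, φ, hφ, hconv⟩ := hν
  have hlim := tendsto_empiricalWd (μ := μ) hΨ01 fun i => hconv (Ψ i) (hΨc i)
  exact hφ.tendsto_atTop.frequently (hlim.eventually (gt_mem_nhds hr)).frequently

lemma wd_le_of_empConv_of_frequently_lt (hΨc : ∀ i, Continuous (Ψ i))
    (hΨ01 : ∀ i x, Ψ i x ∈ Icc (0 : ℝ) 1) {r : ℝ} (hx : empConv f x ν)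
    (h : ∃ᶠ n in atTop, empiricalWd Ψ f μ n x < r) :
    wd Ψ ν μ ≤ r :=
  le_of_tendsto_of_frequently (tendsto_empiricalWd hΨ01 (u := id) fun i => hx (Ψ i) (hΨc i))
    (h.mono fun _ => le_of_lt)

end EmpiricalDistance

section PseudoPhysical

variable {M : Type*} [MetricSpace M] [MeasurableSpace M] [BorelSpace M] {Ψ : ℕ → M → ℝ}
  {Leb μ : Measure M} {f : M → M}

lemma exists_empConv_pseudoPhysical_wd_lt (hΨc : ∀ i, Continuous (Ψ i))
    (hΨ01 : ∀ i x, Ψ i x ∈ Icc (0 : ℝ) 1) [IsProbabilityMeasure Leb] (hf : Continuous f)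
    (hAA1 : Leb {x : M | ∃ μx : Measure M, IsProbabilityMeasure μx ∧ empConv f x μx ∧
      pseudoPhysical Leb f Ψ μx} = 1)
    (hμ : pseudoPhysical Leb f Ψ μ) {ε : ℝ} (hε : 0 < ε) :
    ∃ (x : M) (μx : Measure M), IsProbabilityMeasure μx ∧ empConv f x μx ∧
      pseudoPhysical Leb f Ψ μx ∧ wd Ψ μx μ < ε := by
  have := hμ.1
  set U := {x | ∃ᶠ n in atTop, empiricalWd Ψ f μ n x < ε / 2}
  have hU : MeasurableSet U := measurableSet_setOf_frequently_lt
    (fun n => (continuous_empiricalWd hΨc hΨ01 hf n).measurable) _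
  have hUpos : 0 < Leb U := (hμ.2 _ (half_pos hε)).trans_le <| measure_mono
    fun x ⟨_, hν, hr⟩ => frequently_empiricalWd_lt_of_mem_pOmega hΨc hΨ01 hν hr
  obtain ⟨x, ⟨μx, hμx, hconv, hpp⟩, hxU⟩ := nonempty_inter_of_measure_eq_one hAA1 hU hUpos
  exact ⟨x, μx, hμx, hconv, hpp,
    (wd_le_of_empConv_of_frequently_lt hΨc hΨ01 hconv hxU).trans_lt (half_lt_self hε)⟩

lemma pseudoPhysical_of_forall_wd_lt (hΨ01 : ∀ i x, Ψ i x ∈ Icc (0 : ℝ) 1)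
    [IsProbabilityMeasure μ]
    (h : ∀ ε > (0 : ℝ), ∃ (x : M) (μx : Measure M), IsProbabilityMeasure μx ∧
      empConv f x μx ∧ pseudoPhysical Leb f Ψ μx ∧ wd Ψ μx μ < ε) :
    pseudoPhysical Leb f Ψ μ := by
  refine ⟨‹_›, fun ε hε => ?_⟩
  obtain ⟨-, μx, hμx, -, hpp, hwd⟩ := h (ε / 2) (half_pos hε)
  refine (hpp.2 _ (half_pos hε)).trans_le (measure_mono ?_)
  rintro y ⟨ν, hν, hνwd⟩
  have := hν.1
  refine ⟨ν, hν, ?_⟩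
  calc wd Ψ ν μ ≤ wd Ψ ν μx + wd Ψ μx μ := wd_triangle hΨ01 ν μx μ
    _ < ε / 2 + ε / 2 := add_lt_add hνwd hwd
    _ = ε := add_halves ε

end PseudoPhysical

theorem stmt17_general {M : Type*} [MetricSpace M]
    [MeasurableSpace M] [BorelSpace M]
    (Ψ : ℕ → M → ℝ)
    (hΨc : ∀ i, Continuous (Ψ i))
    (hΨ01 : ∀ i x, Ψ i x ∈ Set.Icc (0 : ℝ) 1)
    (Leb : Measure M) (hLeb : IsProbabilityMeasure Leb)
    (f : M → M) (hf : Continuous f)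
    -- `AA₁` has full Lebesgue measure
    (hAA1 : Leb {x : M | ∃ μx : Measure M, IsProbabilityMeasure μx ∧ empConv f x μx ∧
      pseudoPhysical Leb f Ψ μx} = 1) :
    -- `O_f` equals the weak* closure of `{μ_x : x ∈ AA₁}`
    {μ : Measure M | pseudoPhysical Leb f Ψ μ} =
      {μ : Measure M | IsProbabilityMeasure μ ∧ ∀ ε > (0 : ℝ),
        ∃ (x : M) (μx : Measure M), IsProbabilityMeasure μx ∧ empConv f x μx ∧
          pseudoPhysical Leb f Ψ μx ∧ wd Ψ μx μ < ε} := by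
  ext μ
  refine ⟨fun hμ => ⟨hμ.1, fun ε hε => ?_⟩, fun ⟨hμ, happrox⟩ => ?_⟩
  · exact exists_empConv_pseudoPhysical_wd_lt hΨc hΨ01 hf hAA1 hμ hε
  · exact pseudoPhysical_of_forall_wd_lt hΨ01 happrox

theorem stmt17 {M : Type*} [MetricSpace M] [CompactSpace M]
    [MeasurableSpace M] [BorelSpace M]
    (Ψ : ℕ → M → ℝ)
    (hΨc : ∀ i, Continuous (Ψ i))
    (hΨ01 : ∀ i x, Ψ i x ∈ Set.Icc (0 : ℝ) 1)
    (hdense : ∀ g : M → ℝ, Continuous g → (∀ x, g x ∈ Set.Icc (0 : ℝ) 1) →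
      ∀ ε > (0 : ℝ), ∃ i, ∀ x, |g x - Ψ i x| ≤ ε)
    (Leb : Measure M) (hLeb : IsProbabilityMeasure Leb)
    (f : M → M) (hf : Continuous f)
    -- `AA₁` has full Lebesgue measure
    (hAA1 : Leb {x : M | ∃ μx : Measure M, IsProbabilityMeasure μx ∧ empConv f x μx ∧
      pseudoPhysical Leb f Ψ μx} = 1) :
    -- `O_f` equals the weak* closure of `{μ_x : x ∈ AA₁}`
    {μ : Measure M | pseudoPhysical Leb f Ψ μ} =
      {μ : Measure M | IsProbabilityMeasure μ ∧ ∀ ε > (0 : ℝ),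
        ∃ (x : M) (μx : Measure M), IsProbabilityMeasure μx ∧ empConv f x μx ∧
          pseudoPhysical Leb f Ψ μx ∧ wd Ψ μx μ < ε} :=
  stmt17_general Ψ hΨc hΨ01 Leb hLeb f hf hAA1
end
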